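/- Every multigraph G with all degrees even can be edge-decomposed into k spanning subgraphs G_1, …, G_k, each with all degrees even, such that for each vertex v and each i, |d_{G_i}(v) − d_G(v)/k| < 2. -/

import Mathlib

open Finset

variable {V E : Type*}

/-- Degree of `v` in the sub-multigraph given by the edge set `S`,
where `ends e` gives the two endpoints of edge `e` (loops count twice). -/
def mdeg [DecidableEq V] (ends : E → V × V) (S : Finset E) (v : V) : ℕ :=
  (S.filter fun e => (ends e).1 = v).card + (S.filter fun e => (ends e).2 = v).card

/-- Number of edges with exactly one end in the vertex set `X`. -/
def cutCard [Fintype E] [DecidableEq V] (ends : E → V × V) (X : Finset V) : ℕ :=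
  (univ.filter fun e : E =>
    ((ends e).1 ∈ X ∧ (ends e).2 ∉ X) ∨ ((ends e).1 ∉ X ∧ (ends e).2 ∈ X)).card

/-- `lam`-edge-connectedness: every edge cut has at least `lam` edges. -/
def EdgeConn [Fintype V] [Fintype E] [DecidableEq V] (ends : E → V × V) (lam : ℕ) : Prop :=
  ∀ X : Finset V, X.Nonempty → X ≠ univ → lam ≤ cutCard ends X

/-!
Orient the graph so that every vertex `v` has in- and out-degree `d(v)/2`: by Hall's theorem the
edges can be matched injectively into `d(v)/2` head slots at each vertex. Next cut the in-arcs and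
the out-arcs at each vertex into consecutive blocks of `k` and treat every block as a vertex. This
gives a balanced digraph with in-degrees at most `k`. By Hall's theorem it contains vertex-disjoint
directed cycles through every block of in-degree `k` (an uncovered block is matched to itself).
Removing them and repeating yields `k` colour classes. Each class contains exactly one arc of
every full block and at most one arc of the single partial block at `v`. So it is balanced, with
in-degree within `1` of `d(v)/2k` at `v`, and its undirected degree, twice that in-degree, is even
and within `2` of `d(v)/k`.
-/

open Function

namespace Multidigraph

variable {N : Type*} [DecidableEq N]

def inDeg (d : E → N × N) (S : Finset E) (x : N) : ℕ := #{e ∈ S | (d e).2 = x}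

def outDeg (d : E → N × N) (S : Finset E) (x : N) : ℕ := #{e ∈ S | (d e).1 = x}

def IsBalanced (d : E → N × N) (S : Finset E) : Prop := ∀ x, inDeg d S x = outDeg d S x

section Degrees

variable (d : E → N × N)

lemma sum_inDeg (S : Finset E) (X : Finset N) :
    ∑ x ∈ X, inDeg d S x = #{e ∈ S | (d e).2 ∈ X} :=
  sum_card_fiberwise_eq_card_filter S X fun e => (d e).2

lemma sum_outDeg (S : Finset E) (X : Finset N) :
    ∑ x ∈ X, outDeg d S x = #{e ∈ S | (d e).1 ∈ X} :=
  sum_card_fiberwise_eq_card_filter S X fun e => (d e).1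

lemma inDeg_mono {F S : Finset E} (h : F ⊆ S) (x : N) : inDeg d F x ≤ inDeg d S x :=
  Finset.card_le_card (filter_subset_filter _ h)

variable [DecidableEq E]

lemma inDeg_sdiff_add {F S : Finset E} (h : F ⊆ S) (x : N) :
    inDeg d (S \ F) x + inDeg d F x = inDeg d S x := by
  have : {e ∈ S \ F | (d e).2 = x} = {e ∈ S | (d e).2 = x} \ {e ∈ F | (d e).2 = x} := by
    ext; simp only [mem_sdiff, mem_filter]; tauto
  rw [inDeg, inDeg, inDeg, this, card_sdiff_add_card_eq_card (filter_subset_filter _ h)]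

lemma outDeg_sdiff_add {F S : Finset E} (h : F ⊆ S) (x : N) :
    outDeg d (S \ F) x + outDeg d F x = outDeg d S x :=
  inDeg_sdiff_add (fun e => (d e).swap) h x

variable {d} in
lemma IsBalanced.sdiff {F S : Finset E} (hS : IsBalanced d S) (hF : IsBalanced d F)
    (h : F ⊆ S) : IsBalanced d (S \ F) := fun x => by
  have := inDeg_sdiff_add d h x
  have := outDeg_sdiff_add d h x
  have := hS x
  have := hF x
  omega

end Degrees

section CycleFactor

variable [Fintype N] {d : E → N × N} {S : Finset E} {k : ℕ}

/-- `x` is its own successor when its in-degree is below `k`: such a vertex may stay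
uncovered by the cycle factor. -/
def successors (d : E → N × N) (S : Finset E) (k : ℕ) (x : N) : Finset N :=
  {y | (∃ e ∈ S, d e = (x, y)) ∨ (y = x ∧ inDeg d S x < k)}

/-- Hall's condition, by double counting with weight `1` on arcs and weight `k - inDeg d S x`
on the loop added at an uncovered vertex: every vertex then has total weight `k` on both sides. -/
lemma card_le_card_biUnion_successors (hk : 0 < k) (hbal : IsBalanced d S)
    (hle : ∀ x, inDeg d S x ≤ k) (A : Finset N) :
    #A ≤ #(A.biUnion (successors d S k)) := by
  set B := A.biUnion (successors d S k)
  have hfill : ∀ x, inDeg d S x + (k - inDeg d S x) = k := fun x => Nat.add_sub_cancel' (hle x)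
  have harcs : ∑ x ∈ A, outDeg d S x ≤ ∑ y ∈ B, inDeg d S y := by
    rw [sum_outDeg, sum_inDeg]
    refine Finset.card_le_card (monotone_filter_right _ fun e he hA => ?_)
    exact mem_biUnion.2 ⟨_, hA, mem_filter.2 ⟨mem_univ _, Or.inl ⟨e, he, rfl⟩⟩⟩
  have hloops : ∑ x ∈ A, (k - inDeg d S x) ≤ ∑ y ∈ B, (k - inDeg d S y) := by
    rw [← sum_filter_ne_zero]
    refine sum_le_sum_of_subset_of_nonneg (fun x hx => ?_) fun _ _ _ => Nat.zero_le _
    obtain ⟨hxA, hx⟩ := mem_filter.1 hx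
    exact mem_biUnion.2 ⟨x, hxA, by simp [successors]; omega⟩
  have : k * #A ≤ k * #B := calc
    k * #A = ∑ x ∈ A, (outDeg d S x + (k - inDeg d S x)) := by
      rw [mul_comm, ← smul_eq_mul, ← sum_const]
      exact sum_congr rfl fun x _ => by rw [← hbal x, hfill]
    _ ≤ ∑ y ∈ B, (inDeg d S y + (k - inDeg d S y)) := by
      rw [sum_add_distrib, sum_add_distrib]; exact add_le_add harcs hloops
    _ = k * #B := by
      rw [mul_comm, ← smul_eq_mul, ← sum_const]
      exact sum_congr rfl fun y _ => hfill y
  exact Nat.le_of_mul_le_mul_left this hk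

lemma exists_balanced_of_injective {f : N → N} (hf : Injective f)
    (hfix : ∀ x, (¬ ∃ e ∈ S, d e = (x, f x)) → f x = x) :
    ∃ F ⊆ S, IsBalanced d F ∧
      ∀ x, outDeg d F x = if ∃ e ∈ S, d e = (x, f x) then 1 else 0 := by
  classical
  set P : N → Prop := fun x => ∃ e ∈ S, d e = (x, f x)
  have hsel : ∀ x, ∃ T ⊆ {e ∈ S | d e = (x, f x)}, #T = if P x then 1 else 0 := fun x => by
    refine exists_subset_card_eq ?_
    split_ifs with h
    · obtain ⟨e, he, hde⟩ := h
      exact card_pos.2 ⟨e, mem_filter.2 ⟨he, hde⟩⟩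
    · exact Nat.zero_le _
  choose T hTS hTcard using hsel
  have hT : ∀ x e, e ∈ T x → e ∈ S ∧ d e = (x, f x) := fun x e he =>
    mem_filter.1 (hTS x he)
  have hout : ∀ x, {e ∈ univ.biUnion T | (d e).1 = x} = T x := fun x => by
    ext e
    simp only [mem_filter, mem_biUnion, mem_univ, true_and]
    refine ⟨fun ⟨⟨z, hz⟩, hzx⟩ => ?_, fun he => ⟨⟨x, he⟩, ?_⟩⟩
    · rw [(hT z e hz).2] at hzx
      exact hzx ▸ hz
    · rw [(hT x e he).2]
  have hin : ∀ x, {e ∈ univ.biUnion T | (d e).2 = f x} = T x := fun x => by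
    ext e
    simp only [mem_filter, mem_biUnion, mem_univ, true_and]
    refine ⟨fun ⟨⟨z, hz⟩, hzx⟩ => ?_, fun he => ⟨⟨x, he⟩, ?_⟩⟩
    · rw [(hT z e hz).2] at hzx
      exact hf hzx ▸ hz
    · rw [(hT x e he).2]
  -- unjoined vertices are fixed by `f`, so `f` maps joined vertices exactly onto joined ones
  have hP : ∀ x, P x ↔ P (f x) := fun x => by
    constructor
    · intro hx
      by_contra hfx
      exact hfx (by rwa [hf (hfix _ hfx)])
    · intro hfx
      by_contra hx
      exact hx (by rwa [hfix x hx] at hfx)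
  refine ⟨univ.biUnion T, biUnion_subset.2 fun x _ e he => (hT x e he).1, fun y => ?_,
    fun x => by rw [outDeg, hout, hTcard]⟩
  obtain ⟨x, rfl⟩ := Finite.injective_iff_surjective.1 hf y
  rw [inDeg, outDeg, hin, hout, hTcard, hTcard, if_congr (hP x) rfl rfl]

theorem exists_cycleFactor (hk : 0 < k) (hbal : IsBalanced d S) (hle : ∀ x, inDeg d S x ≤ k) :
    ∃ F ⊆ S, IsBalanced d F ∧
      ∀ x, inDeg d F x ≤ 1 ∧ (inDeg d S x = k → inDeg d F x = 1) := by
  obtain ⟨f, hf, hsucc⟩ := (all_card_le_biUnion_card_iff_exists_injective _).1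
    (card_le_card_biUnion_successors hk hbal hle)
  have hmem : ∀ x, (∃ e ∈ S, d e = (x, f x)) ∨ (f x = x ∧ inDeg d S x < k) := fun x => by
    simpa [successors] using hsucc x
  obtain ⟨F, hFS, hFbal, hFout⟩ :=
    exists_balanced_of_injective hf fun x hx => ((hmem x).resolve_left hx).1
  refine ⟨F, hFS, hFbal, fun x => ⟨?_, fun hx => ?_⟩⟩
  · rw [hFbal, hFout]
    split_ifs <;> simp
  · rw [hFbal, hFout, if_pos ((hmem x).resolve_right (by omega))]

theorem exists_coloring_cycleFactor :
    ∀ (k : ℕ) {S : Finset E}, IsBalanced d S → (∀ x, inDeg d S x ≤ k + 1) →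
    ∃ c : E → Fin (k + 1), ∀ i, IsBalanced d {e ∈ S | c e = i} ∧
      ∀ x, inDeg d {e ∈ S | c e = i} x ≤ 1 ∧
        (inDeg d S x = k + 1 → inDeg d {e ∈ S | c e = i} x = 1)
  | 0, S, hbal, hle => ⟨0, fun i => by
      have hS : {e ∈ S | (0 : E → Fin 1) e = i} = S :=
        filter_true_of_mem fun _ _ => Subsingleton.elim _ _
      rw [hS]
      exact ⟨hbal, fun x => ⟨hle x, id⟩⟩⟩
  | k + 1, S, hbal, hle => by
    classical
    obtain ⟨F, hFS, hFbal, hF⟩ := exists_cycleFactor (Nat.succ_pos _) hbal hle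
    have hrest : ∀ x, inDeg d (S \ F) x + inDeg d F x = inDeg d S x := inDeg_sdiff_add d hFS
    obtain ⟨c, hc⟩ := exists_coloring_cycleFactor k (hbal.sdiff hFbal hFS) fun x => by
      have := hrest x; have := hle x; have := hF x; omega
    refine ⟨fun e => if e ∈ F then Fin.last _ else (c e).castSucc, fun i => ?_⟩
    induction i using Fin.lastCases with
    | last =>
      have hlast :
          {e ∈ S | (if e ∈ F then Fin.last _ else (c e).castSucc) = Fin.last (k + 1)} = F := by
        ext e
        by_cases he : e ∈ F
        · simp [he, hFS he]
        · simp [he, Fin.castSucc_ne_last]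
      rw [hlast]
      exact ⟨hFbal, hF⟩
    | cast j =>
      have hcast : {e ∈ S | (if e ∈ F then Fin.last _ else (c e).castSucc) = j.castSucc} =
          {e ∈ S \ F | c e = j} := by
        ext e
        by_cases he : e ∈ F <;> simp [he, (Fin.castSucc_ne_last j).symm]
      rw [hcast]
      refine ⟨(hc j).1, fun x => ⟨((hc j).2 x).1, fun hx => ((hc j).2 x).2 ?_⟩⟩
      have := hrest x; have := (hF x).2 hx; omega

end CycleFactor

def chunk (k n j : ℕ) : ℕ := #{p ∈ range n | p / k = j}

lemma chunk_succ (k n j : ℕ) : chunk k (n + 1) j = chunk k n j + if n / k = j then 1 else 0 := by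
  rw [chunk, chunk, range_add_one, filter_insert]
  split_ifs <;> simp [card_insert_of_notMem]

lemma chunk_le {k : ℕ} (hk : 0 < k) (n j : ℕ) : chunk k n j ≤ k := by
  calc chunk k n j ≤ #(Ico (j * k) (j * k + k)) :=
        Finset.card_le_card fun p hp => by
          have := (Nat.div_eq_iff hk).1 (mem_filter.1 hp).2
          simp only [mem_Ico]; omega
    _ = k := by simp

lemma chunk_eq_zero_or_eq {k : ℕ} (hk : 0 < k) {n j : ℕ} (hj : j ≠ n / k) :
    chunk k n j = 0 ∨ chunk k n j = k := by
  rcases Nat.lt_or_gt_of_ne hj with hlt | hgt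
  · right
    have hn := (Nat.le_div_iff_mul_le hk).1 hlt
    rw [Nat.succ_mul] at hn
    have : {p ∈ range n | p / k = j} = Ico (j * k) (j * k + k) := by
      ext p
      simp only [mem_filter, mem_range, mem_Ico, Nat.div_eq_iff hk]
      omega
    rw [chunk, this]; simp
  · left
    refine card_eq_zero.2 (filter_eq_empty_iff.2 fun p hp hpj => ?_)
    have := Nat.div_le_div_right (c := k) (mem_range.1 hp).le
    omega

variable [Fintype E] in
/-- Labels each arc by its block among the arcs with the same `g`-value; there are at most `#E`
blocks, so the blocks form a finite vertex type. -/
lemma exists_chunking {M : Type*} [DecidableEq M] (g : E → M) (k : ℕ) :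
    ∃ β : E → Fin (Fintype.card E + 1), ∀ v (j : Fin (Fintype.card E + 1)),
      #{e | g e = v ∧ β e = j} = chunk k #{e | g e = v} j := by
  classical
  suffices ∀ s : Finset E, ∃ β : E → Fin (Fintype.card E + 1), ∀ v j,
      #{e ∈ s | g e = v ∧ β e = j} = chunk k #{e ∈ s | g e = v} j from this univ
  intro s
  induction s using Finset.induction_on with
  | empty => exact ⟨0, by simp [chunk]⟩
  | insert a s ha ih =>
    obtain ⟨β, hβ⟩ := ih
    set m := #{e ∈ s | g e = g a}
    have hm : m / k < Fintype.card E + 1 :=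
      Nat.lt_succ_of_le ((Nat.div_le_self _ _).trans ((card_filter_le _ _).trans (card_le_univ _)))
    refine ⟨update β a ⟨m / k, hm⟩, fun v j => ?_⟩
    have hs : {e ∈ s | g e = v ∧ update β a ⟨m / k, hm⟩ e = j} =
        {e ∈ s | g e = v ∧ β e = j} :=
      filter_congr fun e he => by rw [update_of_ne (ne_of_mem_of_not_mem he ha)]
    rw [filter_insert, filter_insert, hs, update_self]
    by_cases hv : g a = v
    · subst hv
      rw [if_pos rfl, card_insert_of_notMem (by simp [ha]), chunk_succ, ← hβ]
      by_cases hj : m / k = j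
      · rw [if_pos ⟨rfl, Fin.ext hj⟩, if_pos hj, card_insert_of_notMem (by simp [ha])]
      · rw [if_neg fun h => hj (Fin.ext_iff.1 h.2), if_neg hj, add_zero]
    · simp [hv, hβ]

section Blocks

variable {J : Type*} [Fintype J] [DecidableEq J]

lemma inDeg_eq_sum_inDeg_fiber (d : E → (N × J) × (N × J)) (S : Finset E) (x : N) :
    inDeg (fun e => ((d e).1.1, (d e).2.1)) S x = ∑ j, inDeg d S (x, j) := by
  rw [inDeg, card_eq_sum_card_fiberwise (f := fun e => (d e).2.2) fun _ _ => mem_coe.2 (mem_univ _)]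
  refine sum_congr rfl fun j _ => ?_
  rw [inDeg, filter_filter]
  exact congrArg card (filter_congr fun e _ => by simp [Prod.ext_iff])

lemma outDeg_eq_sum_outDeg_fiber (d : E → (N × J) × (N × J)) (S : Finset E) (x : N) :
    outDeg (fun e => ((d e).1.1, (d e).2.1)) S x = ∑ j, outDeg d S (x, j) :=
  inDeg_eq_sum_inDeg_fiber (fun e => (d e).swap) S x

lemma IsBalanced.fiber {d : E → (N × J) × (N × J)} {S : Finset E} (h : IsBalanced d S) :
    IsBalanced (fun e => ((d e).1.1, (d e).2.1)) S := fun x => by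
  rw [inDeg_eq_sum_inDeg_fiber, outDeg_eq_sum_outDeg_fiber]
  exact sum_congr rfl fun j _ => h (x, j)

lemma mul_sum_lt_add_and_sum_lt_mul_add {k : ℕ} (hk : 0 < k) {c y : J → ℕ} (j₀ : J)
    (hc : ∀ j ≠ j₀, c j = 0 ∨ c j = k) (hc₀ : c j₀ ≤ k) (hy : ∀ j, y j ≤ 1)
    (hyc : ∀ j, y j ≤ c j) (hfull : ∀ j, c j = k → y j = 1) :
    k * ∑ j, y j < ∑ j, c j + k ∧ ∑ j, c j < k * ∑ j, y j + k := by
  have hrest : ∑ j ∈ univ.erase j₀, k * y j = ∑ j ∈ univ.erase j₀, c j :=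
    sum_congr rfl fun j hj => by
      rcases hc j (ne_of_mem_erase hj) with h | h
      · have := hyc j
        rw [h] at this ⊢
        rw [Nat.le_zero.1 this, mul_zero]
      · rw [hfull j h, h, mul_one]
  rw [mul_sum, ← add_sum_erase _ _ (mem_univ j₀), ← add_sum_erase _ c (mem_univ j₀), hrest]
  rcases Nat.le_one_iff_eq_zero_or_eq_one.1 (hy j₀) with h | h
  · have : c j₀ ≠ k := fun hck => by simp [hfull j₀ hck] at h
    rw [h]
    omega
  · have := hyc j₀
    rw [h] at this ⊢
    omega

end Blocks

variable [Fintype N] [Fintype E] in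
theorem exists_equitable_coloring {o : E → N × N} (hbal : IsBalanced o univ) (k : ℕ) :
    ∃ c : E → Fin (k + 1), ∀ i, IsBalanced o {e | c e = i} ∧ ∀ x,
      (k + 1) * inDeg o {e | c e = i} x < inDeg o univ x + (k + 1) ∧
      inDeg o univ x < (k + 1) * inDeg o {e | c e = i} x + (k + 1) := by
  classical
  obtain ⟨βout, hout⟩ := exists_chunking (fun e => (o e).1) (k + 1)
  obtain ⟨βin, hin⟩ := exists_chunking (fun e => (o e).2) (k + 1)
  set blk : E → (N × Fin _) × (N × Fin _) := fun e => (((o e).1, βout e), ((o e).2, βin e))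
  have hblkIn : ∀ x j, inDeg blk univ (x, j) = chunk (k + 1) (inDeg o univ x) j := by
    intro x j
    rw [inDeg, inDeg, ← hin]
    simp [blk, Prod.ext_iff]
  have hblkOut : ∀ x j, outDeg blk univ (x, j) = chunk (k + 1) (outDeg o univ x) j := by
    intro x j
    rw [outDeg, outDeg, ← hout]
    simp [blk, Prod.ext_iff]
  obtain ⟨c, hc⟩ := exists_coloring_cycleFactor k (d := blk) (S := univ)
    (fun ⟨x, j⟩ => by rw [hblkIn, hblkOut, hbal])
    (fun ⟨x, j⟩ => hblkIn x j ▸ chunk_le k.succ_pos _ _)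
  refine ⟨c, fun i => ⟨(hc i).1.fiber, fun x => ?_⟩⟩
  have hn : inDeg o univ x / (k + 1) < Fintype.card E + 1 :=
    Nat.lt_succ_of_le ((Nat.div_le_self _ _).trans (card_filter_le _ _))
  rw [show o = fun e => ((blk e).1.1, (blk e).2.1) from rfl, inDeg_eq_sum_inDeg_fiber,
    inDeg_eq_sum_inDeg_fiber]
  refine mul_sum_lt_add_and_sum_lt_mul_add k.succ_pos ⟨_, hn⟩ (fun j hj => ?_) ?_
    (fun j => ((hc i).2 (x, j)).1) (fun j => inDeg_mono blk (filter_subset _ _) _)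
    (fun j => ((hc i).2 (x, j)).2)
  · rw [hblkIn]
    exact chunk_eq_zero_or_eq k.succ_pos fun h => hj (Fin.ext h)
  · rw [hblkIn]
    exact chunk_le k.succ_pos _ _

end Multidigraph

section Orientation

open Multidigraph

variable [DecidableEq V] (ends : E → V × V)

def IsOrientation (ends o : E → V × V) : Prop := ∀ e, o e = ends e ∨ o e = (ends e).swap

lemma mdeg_eq_outDeg_add_inDeg (S : Finset E) (v : V) :
    mdeg ends S v = outDeg ends S v + inDeg ends S v := rfl

lemma IsOrientation.mdeg_eq {ends o : E → V × V} (ho : IsOrientation ends o) (S : Finset E)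
    (v : V) : mdeg o S v = mdeg ends S v := by
  simp only [mdeg, card_filter, ← sum_add_distrib]
  refine sum_congr rfl fun e _ => ?_
  rcases ho e with h | h <;> rw [h]
  simp only [Prod.fst_swap, Prod.snd_swap, add_comm]

lemma mdeg_eq_two_mul_inDeg {o : E → V × V} (ho : IsOrientation ends o) {S : Finset E}
    (hb : IsBalanced o S) (v : V) : mdeg ends S v = 2 * inDeg o S v := by
  rw [← ho.mdeg_eq, mdeg_eq_outDeg_add_inDeg, ← hb v, two_mul]

variable [Fintype V]

lemma sum_mdeg (S : Finset E) : ∑ v, mdeg ends S v = 2 * #S := by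
  simp [mdeg_eq_outDeg_add_inDeg, sum_add_distrib, sum_inDeg, sum_outDeg, two_mul]

variable [Fintype E]

def halfDegSlots (v : V) : Finset (V × ℕ) := {v} ×ˢ range (mdeg ends univ v / 2)

def headSlots (e : E) : Finset (V × ℕ) :=
  halfDegSlots ends (ends e).1 ∪ halfDegSlots ends (ends e).2

lemma card_le_card_biUnion_headSlots (heven : ∀ v, Even (mdeg ends univ v)) (A : Finset E) :
    #A ≤ #(A.biUnion (headSlots ends)) := by
  set B := A.biUnion (headSlots ends)
  have hv : ∀ v, mdeg ends A v ≤ 2 * #{p ∈ B | p.1 = v} := fun v => by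
    by_cases h : mdeg ends A v = 0
    · rw [h]
      exact Nat.zero_le _
    obtain ⟨e, heA, hev⟩ : ∃ e ∈ A, (ends e).1 = v ∨ (ends e).2 = v := by
      by_contra! hno
      apply h
      simp [mdeg, filter_eq_empty_iff.2 fun e he => (hno e he).1,
        filter_eq_empty_iff.2 fun e he => (hno e he).2]
    have hsub : halfDegSlots ends v ⊆ {p ∈ B | p.1 = v} := fun p hp => by
      obtain ⟨hpv, -⟩ := mem_product.1 hp
      refine mem_filter.2 ⟨mem_biUnion.2 ⟨e, heA, ?_⟩, mem_singleton.1 hpv⟩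
      rcases hev with rfl | rfl <;> simp [headSlots, hp]
    calc mdeg ends A v ≤ mdeg ends univ v :=
          add_le_add (inDeg_mono (fun e => (ends e).swap) (subset_univ A) v)
            (inDeg_mono ends (subset_univ A) v)
      _ = 2 * #(halfDegSlots ends v) := by
          simp [halfDegSlots, Nat.mul_div_cancel' (even_iff_two_dvd.1 (heven v))]
      _ ≤ 2 * #{p ∈ B | p.1 = v} := Nat.mul_le_mul_left 2 (Finset.card_le_card hsub)
  have : 2 * #A ≤ 2 * #B := calc
    2 * #A = ∑ v, mdeg ends A v := (sum_mdeg ends A).symm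
    _ ≤ ∑ v, 2 * #{p ∈ B | p.1 = v} := sum_le_sum fun v _ => hv v
    _ = 2 * #B := by
      rw [← mul_sum, ← card_eq_sum_card_fiberwise fun _ _ => mem_coe.2 (mem_univ _)]
  omega

theorem exists_balanced_orientation (heven : ∀ v, Even (mdeg ends univ v)) :
    ∃ o, IsOrientation ends o ∧ IsBalanced o univ := by
  obtain ⟨f, hf, hfs⟩ := (all_card_le_biUnion_card_iff_exists_injective _).1
    (card_le_card_biUnion_headSlots ends heven)
  have hslot : ∀ e, ((f e).1 = (ends e).1 ∨ (f e).1 = (ends e).2) ∧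
      f e ∈ halfDegSlots ends (f e).1 := fun e => by
      rcases mem_union.1 (hfs e) with h | h <;>
        obtain ⟨hv, -⟩ := mem_product.1 h <;> rw [mem_singleton.1 hv] <;> simp [h]
  set o : E → V × V := fun e => if (f e).1 = (ends e).2 then ends e else (ends e).swap
  have ho : IsOrientation ends o := fun e => by
    by_cases h : (f e).1 = (ends e).2 <;> simp [o, h]
  have hhead : ∀ e, (o e).2 = (f e).1 := fun e => by
    by_cases h : (f e).1 = (ends e).2
    · simp [o, h]
    · simp [o, h, ((hslot e).1.resolve_right h).symm]
  have hle : ∀ v, inDeg o univ v ≤ mdeg ends univ v / 2 := fun v => calc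
    inDeg o univ v ≤ #(halfDegSlots ends v) :=
      card_le_card_of_injOn f (fun e he => by
        rw [← (mem_filter.1 he).2, hhead]; exact (hslot e).2) hf.injOn
    _ = mdeg ends univ v / 2 := by simp [halfDegSlots]
  have hsum : ∑ v, inDeg o univ v = ∑ v, mdeg ends univ v / 2 := by
    have h2 : ∑ v, mdeg ends univ v = 2 * ∑ v, mdeg ends univ v / 2 := by
      rw [mul_sum]
      exact sum_congr rfl fun v _ => (Nat.mul_div_cancel' (even_iff_two_dvd.1 (heven v))).symm
    rw [sum_inDeg, filter_true_of_mem fun _ _ => mem_univ _]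
    rw [sum_mdeg] at h2
    omega
  have hin : ∀ v, inDeg o univ v = mdeg ends univ v / 2 := fun v =>
    (sum_eq_sum_iff_of_le fun v _ => hle v).1 hsum v (mem_univ v)
  refine ⟨o, ho, fun v => ?_⟩
  have h₁ := ho.mdeg_eq univ v
  have h₂ := Nat.div_two_mul_two_of_even (heven v)
  have h₃ := hin v
  rw [mdeg_eq_outDeg_add_inDeg o] at h₁
  omega

end Orientation

lemma abs_two_mul_sub_div_lt_two {x n k : ℕ} (hk : 0 < k) (h₁ : k * x < n + k)
    (h₂ : n < k * x + k) : |((2 * x : ℕ) : ℝ) - ((2 * n : ℕ) : ℝ) / k| < 2 := by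
  have hk' : (0 : ℝ) < k := by exact_mod_cast hk
  have h₁' : (k : ℝ) * x < n + k := by exact_mod_cast h₁
  have h₂' : (n : ℝ) < k * x + k := by exact_mod_cast h₂
  have heq : ((2 * x : ℕ) : ℝ) - ((2 * n : ℕ) : ℝ) / k = 2 * ((k * x - n) / k) := by
    push_cast
    field_simp
  rw [heq, abs_mul, abs_two, abs_div, abs_of_pos hk']
  have : |(k : ℝ) * x - n| < k := abs_sub_lt_iff.2 ⟨by linarith, by linarith⟩
  have : |(k : ℝ) * x - n| / k < 1 := (div_lt_one hk').2 this
  linarith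

/-- Hilton's theorem: every Eulerian multigraph decomposes into `k` even factors with
degrees within `2` of `d_G(v)/k`. -/
theorem hilton_even_factorization [Fintype V] [Fintype E] [DecidableEq V]
    (ends : E → V × V) (k : ℕ) (hk : 0 < k)
    (heven : ∀ v : V, Even (mdeg ends univ v)) :
    ∃ c : E → Fin k, ∀ v : V, ∀ i : Fin k,
      Even (mdeg ends (univ.filter fun e => c e = i) v) ∧
      |((mdeg ends (univ.filter fun e => c e = i) v : ℝ)) -
        (mdeg ends univ v : ℝ) / (k : ℝ)| < 2 := by
  obtain ⟨o, ho, hbal⟩ := exists_balanced_orientation ends heven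
  obtain ⟨k, rfl⟩ : ∃ k', k = k' + 1 := ⟨k - 1, by omega⟩
  obtain ⟨c, hc⟩ := Multidigraph.exists_equitable_coloring hbal k
  refine ⟨c, fun v i => ?_⟩
  rw [mdeg_eq_two_mul_inDeg ends ho (hc i).1, mdeg_eq_two_mul_inDeg ends ho hbal]
  exact ⟨even_two_mul _, abs_two_mul_sub_div_lt_two k.succ_pos ((hc i).2 v).1 ((hc i).2 v).2⟩
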